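/- Let Y_0 = 0, Y_1,...,Y_n satisfy for all t: |Y_t − Y_{t−1}| ≤ 1 almost surely and E[Y_t − Y_{t−1} | F_{t−1}] ≤ −α·E[(Y_t − Y_{t−1})^2 | F_{t−1}] for some α ∈ (0, 1/2). Then for all λ ≥ 0, P[∃ t ≤ n : Y_t ≥ λ] ≤ exp(−αλ). -/

import Mathlib

open MeasureTheory Real

/-!
On `|x| ≤ 1` we have `exp x ≤ 1 + x + x²`, so conditionally on `ℱ t` the factor `exp (α ΔY)` has
mean at most `1 + α E[ΔY | ℱ t] + α² E[ΔY² | ℱ t] ≤ 1` by the drift condition: `exp (α Y t)` is a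
nonnegative supermartingale started at `1`. Optional stopping at the first time it reaches
`exp (α λ)` gives Ville's inequality `P[∃ t ≤ n, exp (α Y t) ≥ exp (α λ)] ≤ exp (-α λ)`.
-/

namespace MeasureTheory

variable {Ω : Type*} {m m0 : MeasurableSpace Ω} {μ : Measure Ω} [IsFiniteMeasure μ]

lemma condExp_exp_mul_le_one (hm : m ≤ m0) {X : Ω → ℝ} (hX : AEStronglyMeasurable X μ)
    (hX1 : ∀ᵐ ω ∂μ, |X ω| ≤ 1) {α : ℝ} (hα0 : 0 ≤ α) (hα1 : α ≤ 1)
    (hdrift : ∀ᵐ ω ∂μ, μ[X | m] ω ≤ -α * μ[fun ω => X ω ^ 2 | m] ω) :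
    ∀ᵐ ω ∂μ, μ[fun ω => exp (α * X ω) | m] ω ≤ 1 := by
  have hXint : Integrable X μ := .of_bound hX 1 hX1
  have hX2int : Integrable (fun ω => X ω ^ 2) μ := hXint.mul_bdd hX hX1 |>.congr (by
    filter_upwards with ω; ring)
  set F : Ω → ℝ := (fun _ => 1) + α • X + α ^ 2 • fun ω => X ω ^ 2 with hF
  have hexp_le : (fun ω => exp (α * X ω)) ≤ᵐ[μ] F := by
    filter_upwards [hX1] with ω h
    have hαX : |α * X ω| ≤ 1 := by
      rw [abs_mul, abs_of_nonneg hα0]; nlinarith [abs_nonneg (X ω)]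
    have := (abs_le.1 (abs_exp_sub_one_sub_id_le hαX)).2
    simp only [hF, Pi.add_apply, Pi.smul_apply, smul_eq_mul]
    linarith [mul_pow α (X ω) 2]
  have hF_int : Integrable F μ := ((integrable_const 1).add (hXint.smul α)).add (hX2int.smul _)
  have hexp_int : Integrable (fun ω => exp (α * X ω)) μ :=
    hF_int.mono' (continuous_exp.comp_aestronglyMeasurable (hX.const_mul α))
      (by filter_upwards [hexp_le] with ω h; rwa [norm_of_nonneg (exp_pos _).le])
  have hcondF : μ[F | m] =ᵐ[μ] (fun _ => 1) + α • μ[X | m] + α ^ 2 • μ[fun ω => X ω ^ 2 | m] := by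
    filter_upwards [condExp_add ((integrable_const 1).add (hXint.smul α)) (hX2int.smul (α ^ 2)) m,
      condExp_add (integrable_const 1) (hXint.smul α) m, condExp_smul α X m,
      condExp_smul (α ^ 2) (fun ω => X ω ^ 2) m] with ω h1 h2 h3 h4
    rw [h1, Pi.add_apply, h2, Pi.add_apply, h3, h4, condExp_const hm]; rfl
  filter_upwards [condExp_mono hexp_int hF_int hexp_le, hcondF, hdrift] with ω h1 h2 h3
  rw [h2] at h1
  simp only [Pi.add_apply, Pi.smul_apply, smul_eq_mul] at h1
  linarith [mul_le_mul_of_nonneg_left h3 hα0]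

lemma supermartingale_exp_mul {ℱ : Filtration ℕ m0} {Y : ℕ → Ω → ℝ} (hY : Adapted ℱ Y)
    {α : ℝ} (hα0 : 0 ≤ α) (hα1 : α ≤ 1) (hY0 : Integrable (fun ω => exp (α * Y 0 ω)) μ)
    (hbdd : ∀ t, ∀ᵐ ω ∂μ, |Y (t + 1) ω - Y t ω| ≤ 1)
    (hdrift : ∀ t, ∀ᵐ ω ∂μ,
      (μ[fun ω' => Y (t + 1) ω' - Y t ω' | ℱ t]) ω ≤
        -α * (μ[fun ω' => (Y (t + 1) ω' - Y t ω') ^ 2 | ℱ t]) ω) :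
    Supermartingale (fun t ω => exp (α * Y t ω)) ℱ μ := by
  set M : ℕ → Ω → ℝ := fun t ω => exp (α * Y t ω)
  set Z : ℕ → Ω → ℝ := fun t ω => exp (α * (Y (t + 1) ω - Y t ω))
  have hMZ t : M (t + 1) = M t * Z t := funext fun ω => by
    simp only [M, Z, Pi.mul_apply, ← exp_add]; ring_nf
  have hM_adapted : Adapted ℱ M := fun t => (measurable_const.mul (hY t)).exp
  have hY_meas t : Measurable (Y t) := (hY t).mono (ℱ.le t) le_rfl
  have hΔ_meas t : AEStronglyMeasurable (fun ω => Y (t + 1) ω - Y t ω) μ :=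
    ((hY_meas (t + 1)).sub (hY_meas t)).aestronglyMeasurable
  have hZ_meas t : AEStronglyMeasurable (Z t) μ :=
    continuous_exp.comp_aestronglyMeasurable ((hΔ_meas t).const_mul α)
  have hZ_bdd t : ∀ᵐ ω ∂μ, ‖Z t ω‖ ≤ exp α := by
    filter_upwards [hbdd t] with ω h
    rw [norm_of_nonneg (exp_pos _).le, exp_le_exp]
    nlinarith [(abs_le.1 h).2]
  have hM_int t : Integrable (M t) μ := by
    induction t with
    | zero => exact hY0
    | succ t ih => rw [hMZ]; exact ih.mul_bdd (hZ_meas t) (hZ_bdd t)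
  refine supermartingale_nat hM_adapted.stronglyAdapted hM_int fun t => ?_
  filter_upwards [condExp_mul_of_stronglyMeasurable_left (hM_adapted t).stronglyMeasurable
      (hMZ t ▸ hM_int (t + 1)) (.of_bound (hZ_meas t) _ (hZ_bdd t)),
    condExp_exp_mul_le_one (ℱ.le t) (hΔ_meas t) (hbdd t) hα0 hα1 (hdrift t)] with ω hpull hZ
  rw [hMZ, hpull]
  exact mul_le_of_le_one_right (exp_pos _).le hZ

lemma Supermartingale.maximal_ineq_of_nonneg {ℱ : Filtration ℕ m0} {M : ℕ → Ω → ℝ}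
    (hM : Supermartingale M ℱ μ) (hnonneg : 0 ≤ M) (ε : ℝ) (n : ℕ) :
    ε * μ.real {ω | ∃ t ≤ n, ε ≤ M t ω} ≤ ∫ ω, M 0 ω ∂μ := by
  set τ : Ω → ℕ∞ := fun ω => (hittingBtwn M {y | ε ≤ y} 0 n ω : ℕ)
  have hτ : IsStoppingTime ℱ τ :=
    hM.stronglyAdapted.adapted.isStoppingTime_hittingBtwn measurableSet_Ici
  have hτn ω : τ ω ≤ n := WithTop.coe_le_coe.2 (hittingBtwn_le ω)
  have hA : MeasurableSet {ω | ∃ t ≤ n, ε ≤ M t ω} := by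
    have hM_meas t : Measurable (M t) := (hM.stronglyMeasurable t).measurable.mono (ℱ.le t) le_rfl
    simp only [← exists_prop, Set.ofPred_exists]
    exact .iUnion fun t => .iUnion fun _ => measurableSet_le measurable_const (hM_meas t)
  have hint : Integrable (stoppedValue M τ) μ := (hM.neg.integrable_stoppedValue hτ hτn).neg.congr
    (ae_of_all _ fun ω => neg_neg _)
  -- Mathlib's optional stopping theorem is stated for submartingales, hence `-M`.
  have hstop : ∫ ω, stoppedValue M τ ω ∂μ ≤ ∫ ω, M 0 ω ∂μ := by
    have := hM.neg.expected_stoppedValue_mono (isStoppingTime_const ℱ 0) hτ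
      (fun ω => bot_le) hτn
    simpa [stoppedValue, integral_neg] using this
  calc ε * μ.real {ω | ∃ t ≤ n, ε ≤ M t ω}
      ≤ ∫ ω in {ω | ∃ t ≤ n, ε ≤ M t ω}, stoppedValue M τ ω ∂μ :=
        setIntegral_ge_of_const_le_real hA (measure_ne_top _ _)
          (fun ω ⟨t, ht, h⟩ => stoppedValue_hittingBtwn_mem ⟨t, ⟨Nat.zero_le t, ht⟩, h⟩)
          hint.integrableOn
    _ ≤ ∫ ω, stoppedValue M τ ω ∂μ :=
        setIntegral_le_integral hint (ae_of_all _ fun ω => hnonneg _ _)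
    _ ≤ ∫ ω, M 0 ω ∂μ := hstop

end MeasureTheory

theorem freedman_drift_maximal_tail_general {Ω : Type*} {m0 : MeasurableSpace Ω} (μ : Measure Ω)
    [IsProbabilityMeasure μ] (ℱ : Filtration ℕ m0) (n : ℕ) (Y : ℕ → Ω → ℝ)
    (hadapted : Adapted ℱ Y) (hY0 : ∀ ω, Y 0 ω = 0) (α : ℝ)
    (hα : α ∈ Set.Ioo (0 : ℝ) (1 / 2))
    (hbdd : ∀ t, ∀ᵐ ω ∂μ, |Y (t + 1) ω - Y t ω| ≤ 1)
    (hdrift : ∀ t, ∀ᵐ ω ∂μ,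
      (μ[fun ω' => Y (t + 1) ω' - Y t ω' | ℱ t]) ω ≤
        -α * (μ[fun ω' => (Y (t + 1) ω' - Y t ω') ^ 2 | ℱ t]) ω)
    (lam : ℝ) :
    μ {ω | ∃ t ≤ n, lam ≤ Y t ω} ≤ ENNReal.ofReal (Real.exp (-α * lam)) := by
  obtain ⟨hα0, hα_lt⟩ := hα
  have hM := supermartingale_exp_mul hadapted hα0.le (by linarith) (by simp [hY0]) hbdd hdrift
  have hmax := hM.maximal_ineq_of_nonneg (fun _ _ => (exp_pos _).le) (exp (α * lam)) n
  simp only [hY0, mul_zero, exp_zero, integral_const, probReal_univ, smul_eq_mul, mul_one] at hmax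
  have hsub : {ω | ∃ t ≤ n, lam ≤ Y t ω} ⊆ {ω | ∃ t ≤ n, exp (α * lam) ≤ exp (α * Y t ω)} :=
    fun ω ⟨t, ht, h⟩ => ⟨t, ht, exp_le_exp.2 (mul_le_mul_of_nonneg_left h hα0.le)⟩
  rw [ENNReal.le_ofReal_iff_toReal_le (measure_ne_top _ _) (exp_pos _).le, neg_mul, exp_neg,
    ← measureReal_def]
  calc μ.real {ω | ∃ t ≤ n, lam ≤ Y t ω}
      ≤ μ.real {ω | ∃ t ≤ n, exp (α * lam) ≤ exp (α * Y t ω)} := measureReal_mono hsub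
    _ ≤ (exp (α * lam))⁻¹ := by rwa [← one_div, le_div_iff₀' (exp_pos _)]

/-- Freedman-type maximal inequality (Corollary 16): if `Y₀ = 0`, the increments `Y_t - Y_{t-1}`
are bounded by `1` and satisfy the conditional drift condition
`E[Y_t - Y_{t-1} | F_{t-1}] ≤ -α E[(Y_t - Y_{t-1})² | F_{t-1}]` for some `α ∈ (0, 1/2)`,
then `P[∃ t ≤ n, Y_t ≥ λ] ≤ exp(-αλ)` for every `λ ≥ 0`. -/
theorem freedman_drift_maximal_tail {Ω : Type*} {m0 : MeasurableSpace Ω} (μ : Measure Ω)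
    [IsProbabilityMeasure μ] (ℱ : Filtration ℕ m0) (n : ℕ) (Y : ℕ → Ω → ℝ)
    (hadapted : Adapted ℱ Y) (hY0 : ∀ ω, Y 0 ω = 0) (α : ℝ)
    (hα : α ∈ Set.Ioo (0 : ℝ) (1 / 2))
    (hbdd : ∀ t, ∀ᵐ ω ∂μ, |Y (t + 1) ω - Y t ω| ≤ 1)
    (hdrift : ∀ t, ∀ᵐ ω ∂μ,
      (μ[fun ω' => Y (t + 1) ω' - Y t ω' | ℱ t]) ω ≤
        -α * (μ[fun ω' => (Y (t + 1) ω' - Y t ω') ^ 2 | ℱ t]) ω)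
    (lam : ℝ) (hlam : 0 ≤ lam) :
    μ {ω | ∃ t ≤ n, lam ≤ Y t ω} ≤ ENNReal.ofReal (Real.exp (-α * lam)) :=
  freedman_drift_maximal_tail_general μ ℱ n Y hadapted hY0 α hα hbdd hdrift lam
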